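/- Let 𝔫 be the 5-dimensional real Lie algebra l₅,₆ (case B) with orthonormal basis {E₁,…,E₅} and non-zero brackets [E₁,E₂] = m·E₃ + s·E₄ + u·E₅, [E₁,E₃] = v·E₄ + w·E₅, [E₁,E₄] = x·E₅, [E₂,E₃] = y·E₅, where m, v, x, y are non-zero reals, s > 0 and u, w ∈ ℝ. Then there exist no c ∈ ℝ and no derivation D of 𝔫 with Ric = c·Id + D; i.e. 𝔫 is never an algebraic Ricci soliton. -/

import Mathlib

open scoped BigOperators

namespace Nilsoliton10

noncomputable section

abbrev V : Type := Fin 5 → ℝ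

/-- The orthonormal basis vectors E₁,…,E₅ (indexed 0,…,4). -/
def E (i : Fin 5) : V := Pi.single i 1

/-- The inner product making `E` an orthonormal basis. -/
def ip (x y : V) : ℝ := ∑ i, x i * y i

/-- `D` is a derivation of the bracket `br`. -/
def IsDerivation (br : V → V → V) (D : V →ₗ[ℝ] V) : Prop :=
  ∀ X Y : V, D (br X Y) = br (D X) Y + br X (D Y)

/-- `Ric` is the Ricci operator of the nilpotent Lie group with left-invariant
metric determined by the bracket `br` and the orthonormal basis `E`. -/
def IsRicci (br : V → V → V) (Ric : V →ₗ[ℝ] V) : Prop :=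
  ∀ X Y : V, ip (Ric X) Y =
      -(1/2) * (∑ i : Fin 5, ip (br X (E i)) (br Y (E i)))
      + (1/4) * (∑ i : Fin 5, ∑ j : Fin 5, ip (br (E i) (E j)) X * ip (br (E i) (E j)) Y)

/-- The bracket of l₅,₆ (case B): [E₁,E₂] = m·E₃ + s·E₄ + u·E₅,
[E₁,E₃] = v·E₄ + w·E₅, [E₁,E₄] = x·E₅, [E₂,E₃] = y·E₅. -/
def br (m s u v w x y : ℝ) (X Y : V) : V :=
  (m * (X 0 * Y 1 - X 1 * Y 0)) • E 2 + (s * (X 0 * Y 1 - X 1 * Y 0) + v * (X 0 * Y 2 - X 2 * Y 0)) • E 3 + (u * (X 0 * Y 1 - X 1 * Y 0) + w * (X 0 * Y 2 - X 2 * Y 0) + x * (X 0 * Y 3 - X 3 * Y 0) + y * (X 1 * Y 2 - X 2 * Y 1)) • E 4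

lemma ip_E_right (z : V) (k : Fin 5) : ip z (E k) = z k := by
  simp [ip, E, Pi.single_apply]

section Bracket

variable (m s u v w x y : ℝ)

lemma br_apply_zero (X Y : V) : br m s u v w x y X Y 0 = 0 := by
  simp [br, E]

lemma br_apply_one (X Y : V) : br m s u v w x y X Y 1 = 0 := by
  simp [br, E]

/-- Since `[𝔫, 𝔫] ⊆ span {E₃, E₄, E₅}` is preserved by every derivation, a nilsoliton's Ricci
operator maps `[𝔫, 𝔫]` into it as well. -/
lemma ricci_br_apply_zero_one_of_nilsoliton {Ric D : V →ₗ[ℝ] V} {c : ℝ}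
    (hD : IsDerivation (br m s u v w x y) D) (hsol : Ric = c • LinearMap.id + D) (X Y : V) :
    Ric (br m s u v w x y X Y) 0 = 0 ∧ Ric (br m s u v w x y X Y) 1 = 0 := by
  simp [hsol, hD X Y, br_apply_zero, br_apply_one]

lemma ip_ricci_br_E0_E1_E0 {Ric : V →ₗ[ℝ] V} (hRic : IsRicci (br m s u v w x y) Ric) :
    ip (Ric (br m s u v w x y (E 0) (E 1))) (E 0) = m * u * y / 2 := by
  rw [hRic]
  simp [ip, br, E, Fin.sum_univ_five]
  ring

lemma ip_ricci_br_E0_E1_E1 {Ric : V →ₗ[ℝ] V} (hRic : IsRicci (br m s u v w x y) Ric) :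
    ip (Ric (br m s u v w x y (E 0) (E 1))) (E 1) = -(m * (s * v + u * w) + s * u * x) / 2 := by
  rw [hRic]
  simp [ip, br, E, Fin.sum_univ_five]
  ring

end Bracket

theorem stmt10_general (m s u v w x y : ℝ) (hm : m ≠ 0) (hv : v ≠ 0) (hy : y ≠ 0) (hs : 0 < s)
    (Ric : V →ₗ[ℝ] V) (hRic : IsRicci (br m s u v w x y) Ric) :
    ¬ ∃ (c : ℝ) (D : V →ₗ[ℝ] V), IsDerivation (br m s u v w x y) D ∧
        Ric = c • (LinearMap.id : V →ₗ[ℝ] V) + D := by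
  rintro ⟨c, D, hD, hsol⟩
  obtain ⟨h₀, h₁⟩ := ricci_br_apply_zero_one_of_nilsoliton m s u v w x y hD hsol (E 0) (E 1)
  have hcoord₀ : m * u * y / 2 = 0 := by
    rw [← ip_ricci_br_E0_E1_E0 m s u v w x y hRic, ip_E_right, h₀]
  have hu : u = 0 := by simpa [hm, hy] using hcoord₀
  have hcoord₁ : -(m * (s * v + u * w) + s * u * x) / 2 = 0 := by
    rw [← ip_ricci_br_E0_E1_E1 m s u v w x y hRic, ip_E_right, h₁]
  simp [hu, hm, hs.ne', hv] at hcoord₁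

theorem stmt10 (m s u v w x y : ℝ) (hm : m ≠ 0) (hv : v ≠ 0) (hx : x ≠ 0) (hy : y ≠ 0) (hs : 0 < s)
    (Ric : V →ₗ[ℝ] V) (hRic : IsRicci (br m s u v w x y) Ric) :
    ¬ ∃ (c : ℝ) (D : V →ₗ[ℝ] V), IsDerivation (br m s u v w x y) D ∧
        Ric = c • (LinearMap.id : V →ₗ[ℝ] V) + D :=
  stmt10_general m s u v w x y hm hv hy hs Ric hRic

end

end Nilsoliton10
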